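/- For every sequential propositional statement P, se(¬P ∧' F) = se(P ∧' F), i.e., axiom F8 of EqFSCL is valid in the evaluation-tree semantics. -/

import Mathlib

inductive ETree (A : Type*) : Type _
  | T : ETree A
  | F : ETree A
  | node : ETree A → A → ETree A → ETree A

/-- Leaf replacement: `X.repl Y Z = X[T↦Y, F↦Z]`. -/
def ETree.repl {A : Type*} : ETree A → ETree A → ETree A → ETree A
  | .T, y, _ => y
  | .F, _, z => z
  | .node l a r, y, z => .node (l.repl y z) a (r.repl y z)
inductive SeqProp (A : Type*) : Type _
  | atom : A → SeqProp A
  | T : SeqProp A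
  | F : SeqProp A
  | neg : SeqProp A → SeqProp A
  | and : SeqProp A → SeqProp A → SeqProp A
  | or : SeqProp A → SeqProp A → SeqProp A

/-- Short-circuit evaluation function. -/
def se {A : Type*} : SeqProp A → ETree A
  | .T => .T
  | .F => .F
  | .atom a => .node .T a .F
  | .neg P => (se P).repl .F .T
  | .and P Q => (se P).repl (se Q) .F
  | .or P Q => (se P).repl .T (se Q)

theorem ETree.repl_repl {A : Type*} (X y z u v : ETree A) :
    (X.repl y z).repl u v = X.repl (y.repl u v) (z.repl u v) := by
  induction X with
  | T => rfl
  | F => rfl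
  | node l a r hl hr => simp only [ETree.repl, hl, hr]

theorem se_F8 {A : Type*} (P : SeqProp A) :
    se (SeqProp.and (SeqProp.neg P) SeqProp.F) = se (SeqProp.and P SeqProp.F) :=
  (se P).repl_repl .F .T .F .F
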